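/- arXiv:2206.12721 — 2 statements merged into one kernel-verified Lean document; each statement's English description precedes it below -/
import Mathlib

section
/- If f : [0,1] → [0,1] is regulated with Riemann integral ∫₀¹ f(x) dx = 0, then there exists x ∈ [0,1] with f(x) = 0. -/
/-!
A function with one-sided limits everywhere is continuous off a countable set: for each `ε > 0`,
the points where `f` differs from its right limit by at least `ε` are isolated from the right
within that set, and a set of right-isolated points of a second-countable order is countable.
Hence `f` is measurable on `[0, 1]`, and being bounded it is integrable; a nonnegative integrable
function with zero integral vanishes almost everywhere, so it vanishes somewhere on `(0, 1]`.
-/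

open Filter Topology Set intervalIntegral MeasureTheory

section OneSidedLimits

variable {α β : Type*} [LinearOrder α] [TopologicalSpace α] [OrderTopology α]
  [SecondCountableTopology α] [DenselyOrdered α] [MetricSpace β] {f : α → β} {s : Set α}

theorem countable_setOf_not_continuousWithinAt_Ioi_of_exists_tendsto [NoMaxOrder α]
    (hf : ∀ x ∈ s, ∃ L, Tendsto f (𝓝[>] x) (𝓝 L)) :
    {x ∈ s | ¬ContinuousWithinAt f (Ioi x) x}.Countable := by
  set S : ℝ → Set α := fun ε => {x ∈ s | ∃ L, Tendsto f (𝓝[>] x) (𝓝 L) ∧ ε ≤ dist (f x) L}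
  have hS : ∀ ε > 0, (S ε).Countable := by
    intro ε hε
    refine (countable_setOfPred_isolated_right_within (s := S ε)).mono fun x hx => ?_
    refine ⟨hx, ?_⟩
    obtain ⟨-, L, hL, -⟩ := hx
    have hball := hL.eventually (Metric.ball_mem_nhds L (half_pos hε))
    have hnear : ∀ᶠ t in 𝓝[>] x, ∀ᶠ t' in 𝓝[>] t, dist (f t') L < ε / 2 := by
      filter_upwards [eventually_eventually_nhdsWithin.2 hball, self_mem_nhdsWithin]
        with t ht hxt
      exact ht.filter_mono (nhdsWithin_mono t (Ioi_subset_Ioi hxt.le))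
    rw [← empty_mem_iff_bot, inter_comm, nhdsWithin_inter', mem_inf_principal]
    filter_upwards [hnear, hball] with t ht hft
    rintro ⟨-, L', hL', hεL'⟩
    have hL'L : dist L' L ≤ ε / 2 :=
      le_of_tendsto (hL'.dist tendsto_const_nhds) (ht.mono fun _ h => h.le)
    have hft : dist (f t) L < ε / 2 := hft
    linarith [dist_triangle_right (f t) L' L]
  have hsub : {x ∈ s | ¬ContinuousWithinAt f (Ioi x) x} ⊆ ⋃ n : ℕ, S (1 / (n + 1)) := by
    rintro x ⟨hxs, hx⟩
    obtain ⟨L, hL⟩ := hf x hxs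
    have hne : f x ≠ L := fun h => hx (by rwa [ContinuousWithinAt, h])
    obtain ⟨n, hn⟩ := exists_nat_one_div_lt (dist_pos.2 hne)
    exact mem_iUnion.2 ⟨n, hxs, L, hL, hn.le⟩
  exact (countable_iUnion fun n => hS _ Nat.one_div_pos_of_nat).mono hsub

theorem countable_setOf_not_continuousWithinAt_Iio_of_exists_tendsto [NoMinOrder α]
    (hf : ∀ x ∈ s, ∃ L, Tendsto f (𝓝[<] x) (𝓝 L)) :
    {x ∈ s | ¬ContinuousWithinAt f (Iio x) x}.Countable :=
  countable_setOf_not_continuousWithinAt_Ioi_of_exists_tendsto (α := αᵒᵈ) hf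

theorem countable_setOf_not_continuousAt_of_exists_tendsto [NoMinOrder α] [NoMaxOrder α]
    (hl : ∀ x ∈ s, ∃ L, Tendsto f (𝓝[<] x) (𝓝 L))
    (hr : ∀ x ∈ s, ∃ L, Tendsto f (𝓝[>] x) (𝓝 L)) :
    {x ∈ s | ¬ContinuousAt f x}.Countable := by
  refine ((countable_setOf_not_continuousWithinAt_Iio_of_exists_tendsto hl).union
    (countable_setOf_not_continuousWithinAt_Ioi_of_exists_tendsto hr)).mono ?_
  rintro x ⟨hxs, hx⟩
  rw [continuousAt_iff_continuous_left'_right', not_and_or] at hx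
  exact hx.imp (⟨hxs, ·⟩) (⟨hxs, ·⟩)

end OneSidedLimits

theorem aestronglyMeasurable_restrict_of_countable_not_continuousAt {α β : Type*}
    [TopologicalSpace α] [MeasurableSpace α] [OpensMeasurableSpace α] [MeasurableSingletonClass α]
    [TopologicalSpace β] [TopologicalSpace.PseudoMetrizableSpace β]
    [SecondCountableTopologyEither α β]
    {μ : Measure α} [NullSingletonClass μ] {f : α → β} {s : Set α} (hs : MeasurableSet s)
    (hf : {x ∈ s | ¬ContinuousAt f x}.Countable) :
    AEStronglyMeasurable f (μ.restrict s) := by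
  have hcont : ContinuousOn f (s \ {x ∈ s | ¬ContinuousAt f x}) := fun x hx =>
    (not_not.1 fun h => hx.2 ⟨hx.1, h⟩).continuousWithinAt
  rw [← Measure.restrict_congr_set (sdiff_null_ae_eq_self (hf.measure_zero μ))]
  exact hcont.aestronglyMeasurable (hs.diff hf.measurableSet)

theorem exists_eq_zero_of_setIntegral_eq_zero {α : Type*} [MeasurableSpace α] {μ : Measure α}
    {f : α → ℝ} {s : Set α} (hs : MeasurableSet s) (hμs : μ s ≠ 0)
    (hf : 0 ≤ᵐ[μ.restrict s] f) (hfi : IntegrableOn f s μ) (hint : ∫ x in s, f x ∂μ = 0) :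
    ∃ x ∈ s, f x = 0 := by
  have : (ae (μ.restrict s)).NeBot := ae_restrict_neBot.2 hμs
  obtain ⟨x, hfx, hx⟩ :=
    (((integral_eq_zero_iff_of_nonneg_ae hf hfi).1 hint).and (ae_restrict_mem hs)).exists
  exact ⟨x, hx, hfx⟩

theorem regulated_integral_zero_has_zero (f : ℝ → ℝ)
    (hmap : ∀ x ∈ Icc (0:ℝ) 1, f x ∈ Icc (0:ℝ) 1)
    (hr : ∀ x ∈ Ico (0:ℝ) 1, ∃ L : ℝ, Tendsto f (𝓝[>] x) (𝓝 L))
    (hl : ∀ x ∈ Ioc (0:ℝ) 1, ∃ L : ℝ, Tendsto f (𝓝[<] x) (𝓝 L))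
    (hint : (∫ x in (0:ℝ)..1, f x) = 0) :
    ∃ x ∈ Icc (0:ℝ) 1, f x = 0 := by
  have hcont : {x ∈ Ioo (0:ℝ) 1 | ¬ContinuousAt f x}.Countable :=
    countable_setOf_not_continuousAt_of_exists_tendsto
      (fun x hx => hl x (Ioo_subset_Ioc_self hx)) (fun x hx => hr x (Ioo_subset_Ico_self hx))
  have hmeas : AEStronglyMeasurable f (volume.restrict (Ioc (0:ℝ) 1)) := by
    rw [← Measure.restrict_congr_set Ioo_ae_eq_Ioc]
    exact aestronglyMeasurable_restrict_of_countable_not_continuousAt measurableSet_Ioo hcont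
  have hrange : ∀ᵐ x ∂volume.restrict (Ioc (0:ℝ) 1), f x ∈ Icc (0:ℝ) 1 :=
    (ae_restrict_mem measurableSet_Ioc).mono fun x hx => hmap x (Ioc_subset_Icc_self hx)
  have hfi : IntegrableOn f (Ioc 0 1) :=
    .of_bound (by simp) hmeas 1 <| hrange.mono fun x hx => by
      rw [Real.norm_of_nonneg hx.1]; exact hx.2
  rw [integral_of_le zero_le_one] at hint
  obtain ⟨x, hx, hfx⟩ := exists_eq_zero_of_setIntegral_eq_zero measurableSet_Ioc (by simp)
    (hrange.mono fun x hx => hx.1) hfi hint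
  exact ⟨x, Ioc_subset_Icc_self hx, hfx⟩
end

section
/- For any f : ℝ → ℝ, the set of points that are strict local maxima of f is countable. -/
open Filter Topology TopologicalSpace

/-- Pick for each strict local maximum `x` a basic open set `U ∋ x` with `f < f x` on `U \ {x}`.
Two distinct maxima sharing `U` would satisfy `f x' < f x < f x'`, so this choice is injective. -/
theorem countable_setOf_eventually_lt_self {X β : Type*} [TopologicalSpace X]
    [SecondCountableTopology X] [Preorder β] (f : X → β) :
    {x | ∀ᶠ y in 𝓝[≠] x, f y < f x}.Countable := by
  have isolating : ∀ x ∈ {x | ∀ᶠ y in 𝓝[≠] x, f y < f x},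
      ∃ U ∈ countableBasis X, x ∈ U ∧ ∀ y ∈ U, y ≠ x → f y < f x := fun x hx =>
    (isBasis_countableBasis X).mem_nhds_iff.1 (eventually_nhdsWithin_iff.1 hx)
  choose! U hU_basis hx_mem hU_lt using isolating
  refine Set.MapsTo.countable_of_injOn hU_basis (fun x hx x' hx' hUx => ?_)
    (countable_countableBasis X)
  by_contra hne
  have hlt : f x' < f x := hU_lt x hx x' (hUx ▸ hx_mem x' hx') (Ne.symm hne)
  have hgt : f x < f x' := hU_lt x' hx' x (hUx ▸ hx_mem x hx) hne
  exact lt_asymm hlt hgt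

theorem strict_local_maxima_countable (f : ℝ → ℝ) :
    {x : ℝ | ∃ ε > (0:ℝ), ∀ y : ℝ, y ≠ x → |y - x| < ε → f y < f x}.Countable := by
  refine (countable_setOf_eventually_lt_self f).mono fun x ⟨ε, hε, hmax⟩ => ?_
  exact eventually_nhdsWithin_iff.2 <|
    Metric.eventually_nhds_iff_ball.2 ⟨ε, hε, fun y hy hne => hmax y hne hy⟩
end
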